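/- For a random caterpillar with m ≥ 2 spine nodes, W_n/n^2 converges to (m^2+6m-1)/(6m) in L^1 as n → ∞. -/

import Mathlib

open Finset Filter

/-- Number of leaves attached to spine node `i` given attachment choices `ω`. -/
def leafCount {m n : ℕ} (ω : Fin n → Fin m) (i : Fin m) : ℕ :=
  (Finset.univ.filter (fun j => ω j = i)).card

/-- Wiener index of the caterpillar: sum of graph distances over all unordered pairs of
nodes, decomposed into spine–spine, leaf–leaf and spine–leaf contributions. -/
def wiener {m n : ℕ} (ω : Fin n → Fin m) : ℕ :=
  (∑ i : Fin m, ∑ j : Fin m, if i.val < j.val then j.val - i.val else 0)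
    + (∑ i : Fin m, ∑ j : Fin m,
        if i.val < j.val then (j.val - i.val + 2) * (leafCount ω i * leafCount ω j) else 0)
    + (∑ i : Fin m, leafCount ω i * (leafCount ω i - 1))
    + (∑ i : Fin m, ∑ j : Fin m, (Nat.dist i.val j.val + 1) * leafCount ω i)

/-- Hyper Wiener index: `Σ_{pairs} (dist + dist²)`. -/
def hyperWiener {m n : ℕ} (ω : Fin n → Fin m) : ℕ :=
  (∑ i : Fin m, ∑ j : Fin m,
      if i.val < j.val then (j.val - i.val) + (j.val - i.val) ^ 2 else 0)
    + (∑ i : Fin m, ∑ j : Fin m,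
        if i.val < j.val then
          ((j.val - i.val + 2) + (j.val - i.val + 2) ^ 2) * (leafCount ω i * leafCount ω j)
        else 0)
    + (∑ i : Fin m, 3 * (leafCount ω i * (leafCount ω i - 1)))
    + (∑ i : Fin m, ∑ j : Fin m,
        ((Nat.dist i.val j.val + 1) + (Nat.dist i.val j.val + 1) ^ 2) * leafCount ω i)

lemma core {n m : ℕ} (g : Fin n → Fin m → ℝ) :
    ∑ ω : Fin n → Fin m, ∏ j, g j (ω j) = ∏ j, ∑ a, g j a := by
  rw [Finset.prod_univ_sum (fun _ => (univ : Finset (Fin m))) g, Fintype.piFinset_univ]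

lemma indic_sum {n m : ℕ} (i : Fin m) (s : Finset (Fin n)) :
    ∑ ω : Fin n → Fin m, ∏ j ∈ s, (if ω j = i then (1:ℝ) else 0)
      = (m : ℝ) ^ (n - s.card) := by
  have h : ∀ ω : Fin n → Fin m, (∏ j ∈ s, (if ω j = i then (1:ℝ) else 0))
      = ∏ j, (if j ∈ s then (if ω j = i then (1:ℝ) else 0) else 1) := by
    intro ω
    rw [Finset.prod_ite_mem]
    simp [Finset.inter_comm]
  simp_rw [h]
  rw [core (fun j a => if j ∈ s then (if a = i then (1:ℝ) else 0) else 1)]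
  have h2 : ∀ j : Fin n, (∑ a : Fin m, if j ∈ s then (if a = i then (1:ℝ) else 0) else 1)
      = if j ∈ s then 1 else (m : ℝ) := by
    intro j
    by_cases hj : j ∈ s <;> simp [hj]
  simp_rw [h2]
  rw [Finset.prod_ite, Finset.prod_const, Finset.prod_const]
  simp [Finset.filter_mem_eq_inter, Finset.filter_not]
  rw [Finset.card_univ_diff]
  simp

lemma leafCount_eq {m n : ℕ} (ω : Fin n → Fin m) (i : Fin m) :
    (leafCount ω i : ℝ) = ∑ j, if ω j = i then (1:ℝ) else 0 := by
  rw [leafCount]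
  rw [Finset.card_filter]
  push_cast
  rfl

lemma single_ind {m n : ℕ} (i : Fin m) (j : Fin n) :
    ∑ ω : Fin n → Fin m, (if ω j = i then (1:ℝ) else 0) = (m:ℝ) ^ (n - 1) := by
  have := indic_sum i {j}
  simpa using this

lemma double_ind {m n : ℕ} (i : Fin m) (j k : Fin n) (hjk : j ≠ k) :
    ∑ ω : Fin n → Fin m, (if ω j = i then (1:ℝ) else 0) * (if ω k = i then (1:ℝ) else 0)
      = (m:ℝ) ^ (n - 2) := by
  have := indic_sum i {j, k}
  rw [Finset.card_pair hjk] at this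
  rw [← this]
  apply Finset.sum_congr rfl
  intro ω _
  rw [Finset.prod_pair hjk]

lemma moment1 {m n : ℕ} (i : Fin m) :
    ∑ ω : Fin n → Fin m, (leafCount ω i : ℝ) = (n:ℝ) * (m:ℝ) ^ (n - 1) := by
  simp_rw [leafCount_eq]
  rw [Finset.sum_comm]
  simp_rw [single_ind]
  simp [mul_comm]

lemma moment2 {m n : ℕ} (i : Fin m) :
    ∑ ω : Fin n → Fin m, (leafCount ω i : ℝ) ^ 2
      = (n:ℝ) * (m:ℝ) ^ (n - 1) + ((n:ℝ)^2 - n) * (m:ℝ) ^ (n - 2) := by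
  simp_rw [leafCount_eq, sq, Finset.sum_mul_sum]
  rw [Finset.sum_comm]
  have h : ∀ j : Fin n, ∑ ω : Fin n → Fin m, ∑ k : Fin n,
      (if ω j = i then (1:ℝ) else 0) * (if ω k = i then (1:ℝ) else 0)
      = (m:ℝ)^(n-1) + ((n:ℝ) - 1) * (m:ℝ)^(n-2) := by
    intro j
    have : ∀ k : Fin n, ∑ ω : Fin n → Fin m,
        (if ω j = i then (1:ℝ) else 0) * (if ω k = i then (1:ℝ) else 0)
        = if j = k then (m:ℝ)^(n-1) else (m:ℝ)^(n-2) := by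
      intro k
      by_cases hjk : j = k
      · subst hjk
        simp only [if_pos rfl]
        rw [← single_ind i j]
        apply Finset.sum_congr rfl
        intro ω _
        by_cases h : ω j = i <;> simp [h]
      · rw [if_neg hjk, double_ind i j k hjk]
    rw [Finset.sum_comm]
    simp_rw [this]
    have h2 : ∀ k : Fin n, (if j = k then (m:ℝ)^(n-1) else (m:ℝ)^(n-2))
        = (m:ℝ)^(n-2) + (if j = k then (m:ℝ)^(n-1) - (m:ℝ)^(n-2) else 0) := by
      intro k; split <;> ring
    rw [Finset.sum_congr rfl (fun k _ => h2 k), Finset.sum_add_distrib,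
      Finset.sum_const, Finset.sum_ite_eq]
    simp only [Finset.mem_univ, if_true, Finset.card_univ, Fintype.card_fin, nsmul_eq_mul]
    ring
  simp_rw [h]
  rw [Finset.sum_const]
  simp
  ring

lemma var_bound {m n : ℕ} (hm : 1 ≤ m) (i : Fin m) (hn : 2 ≤ n) :
    ∑ ω : Fin n → Fin m, ((leafCount ω i : ℝ) - n / m) ^ 2 ≤ (m:ℝ) ^ n * n := by
  have hm0 : (0:ℝ) < m := by exact_mod_cast hm
  have hcard : (Finset.univ : Finset (Fin n → Fin m)).card = m ^ n := by
    simp [Finset.card_univ]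
  have expand : ∑ ω : Fin n → Fin m, ((leafCount ω i : ℝ) - n / m) ^ 2
      = (∑ ω : Fin n → Fin m, (leafCount ω i : ℝ)^2)
        - 2 * ((n:ℝ)/m) * (∑ ω : Fin n → Fin m, (leafCount ω i : ℝ))
        + (m:ℝ)^n * ((n:ℝ)/m)^2 := by
    rw [Finset.mul_sum, ← Finset.sum_sub_distrib]
    have : ((m:ℝ)^n) * ((n:ℝ)/m)^2 = ∑ _ω : Fin n → Fin m, ((n:ℝ)/m)^2 := by
      rw [Finset.sum_const, hcard]; push_cast; ring
    rw [this, ← Finset.sum_add_distrib]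
    apply Finset.sum_congr rfl
    intro ω _; ring
  rw [expand, moment1, moment2]
  obtain ⟨k, rfl⟩ : ∃ k, n = k + 2 := ⟨n - 2, by omega⟩
  simp only [Nat.add_sub_cancel, show k + 2 - 1 = k + 1 from rfl]
  have hMk : (0:ℝ) < (m:ℝ)^k := pow_pos hm0 k
  have e1 : (m:ℝ)^(k+1) = (m:ℝ)^k * m := pow_succ _ _
  have e2 : (m:ℝ)^(k+2) = (m:ℝ)^k * m * m := by rw [pow_succ, pow_succ]
  rw [e1, e2]
  have key : ((k:ℝ)+2) * ((m:ℝ)^k * m) + (((k:ℝ)+2)^2 - ((k:ℝ)+2)) * (m:ℝ)^k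
      - 2 * (((k:ℝ)+2)/m) * (((k:ℝ)+2) * ((m:ℝ)^k * m))
      + (m:ℝ)^k * m * m * (((k:ℝ)+2)/m)^2
      = ((k:ℝ)+2) * (m:ℝ)^k * ((m:ℝ) - 1) := by
    field_simp
    ring
  push_cast
  rw [key]
  have h1 : (m:ℝ) - 1 ≤ (m:ℝ) * m := by nlinarith
  nlinarith [mul_le_mul_of_nonneg_left h1 (show (0:ℝ) ≤ ((k:ℝ)+2)*(m:ℝ)^k by positivity)]

lemma l1_bound {m n : ℕ} (hm : 1 ≤ m) (i : Fin m) (hn : 2 ≤ n) :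
    ∑ ω : Fin n → Fin m, |(leafCount ω i : ℝ) - n / m| ≤ (m:ℝ) ^ n * Real.sqrt n := by
  have hcs := Finset.sum_mul_sq_le_sq_mul_sq Finset.univ
    (fun ω : Fin n → Fin m => |(leafCount ω i : ℝ) - n / m|) (fun _ => (1:ℝ))
  simp only [mul_one, one_pow, Finset.sum_const, Finset.card_univ, nsmul_eq_mul] at hcs
  have habs : ∑ ω : Fin n → Fin m, |(leafCount ω i : ℝ) - n / m| ^ 2
      = ∑ ω : Fin n → Fin m, ((leafCount ω i : ℝ) - n / m) ^ 2 := by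
    apply Finset.sum_congr rfl; intro ω _; rw [sq_abs]
  rw [habs] at hcs
  have hv := var_bound hm i hn
  have hcard : (Fintype.card (Fin n → Fin m) : ℝ) = (m:ℝ)^n := by
    simp
  have h2 : (∑ ω : Fin n → Fin m, |(leafCount ω i : ℝ) - n / m|) ^ 2
      ≤ ((m:ℝ)^n * Real.sqrt n)^2 := by
    calc (∑ ω : Fin n → Fin m, |(leafCount ω i : ℝ) - n / m|) ^ 2
        ≤ (∑ ω : Fin n → Fin m, ((leafCount ω i : ℝ) - n / m) ^ 2) * (m:ℝ)^n := by
          rw [← hcard]; linarith [hcs]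
      _ ≤ ((m:ℝ)^n * n) * (m:ℝ)^n := by
          apply mul_le_mul_of_nonneg_right hv (by positivity)
      _ = ((m:ℝ)^n * Real.sqrt n)^2 := by
          rw [mul_pow, Real.sq_sqrt (by positivity)]; ring
  have hL : (0:ℝ) ≤ ∑ ω : Fin n → Fin m, |(leafCount ω i : ℝ) - n / m| :=
    Finset.sum_nonneg fun ω _ => abs_nonneg _
  have hR : (0:ℝ) ≤ (m:ℝ)^n * Real.sqrt n := by positivity
  calc ∑ ω : Fin n → Fin m, |(leafCount ω i : ℝ) - n / m|
      = Real.sqrt ((∑ ω : Fin n → Fin m, |(leafCount ω i : ℝ) - n / m|)^2) :=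
        (Real.sqrt_sq hL).symm
    _ ≤ Real.sqrt (((m:ℝ)^n * Real.sqrt n)^2) := Real.sqrt_le_sqrt h2
    _ = (m:ℝ)^n * Real.sqrt n := Real.sqrt_sq hR

lemma gauss_reflect (m : ℕ) : 2 * (∑ i ∈ Finset.range m, (m - i)) = m^2 + m := by
  have h : ∑ i ∈ Finset.range m, (m - i) = ∑ j ∈ Finset.range m, (j + 1) := by
    rw [← Finset.sum_range_reflect (fun j => j + 1) m]
    apply Finset.sum_congr rfl
    intro i hi
    have := Finset.mem_range.mp hi
    omega
  rw [h, Finset.sum_add_distrib, Finset.sum_const, Finset.card_range]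
  have := Finset.sum_range_id_mul_two m
  cases m with
  | zero => simp
  | succ k =>
    have h2 : (k+1) * (k+1-1) = (k+1)*k := rfl
    simp only [smul_eq_mul, mul_one]
    nlinarith [this]

lemma spine6 (m : ℕ) :
    6 * (∑ i ∈ Finset.range m, ∑ j ∈ Finset.range m, if i < j then j - i + 2 else 0) + 7 * m
      = m ^ 3 + 6 * m ^ 2 := by
  induction m with
  | zero => simp
  | succ k ih =>
    have hsplit : (∑ i ∈ Finset.range (k+1), ∑ j ∈ Finset.range (k+1),
          if i < j then j - i + 2 else 0)
        = (∑ i ∈ Finset.range k, ∑ j ∈ Finset.range k, if i < j then j - i + 2 else 0)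
          + ∑ i ∈ Finset.range k, (k - i + 2) := by
      rw [Finset.sum_range_succ]
      have hz : (∑ j ∈ Finset.range (k+1), if k < j then j - k + 2 else 0) = 0 := by
        apply Finset.sum_eq_zero
        intro j hj
        have := Finset.mem_range.mp hj
        rw [if_neg (by omega)]
      rw [hz, add_zero]
      have hrow : ∀ i ∈ Finset.range k, (∑ j ∈ Finset.range (k+1), if i < j then j - i + 2 else 0)
          = (∑ j ∈ Finset.range k, if i < j then j - i + 2 else 0) + (k - i + 2) := by
        intro i hi
        rw [Finset.sum_range_succ, if_pos (Finset.mem_range.mp hi)]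
      rw [Finset.sum_congr rfl hrow, Finset.sum_add_distrib]
    rw [hsplit]
    have hg : ∑ i ∈ Finset.range k, (k - i + 2) = (∑ i ∈ Finset.range k, (k - i)) + 2 * k := by
      rw [Finset.sum_add_distrib, Finset.sum_const, Finset.card_range]; ring
    have hg2 := gauss_reflect k
    nlinarith [ih]

lemma Qlip {m : ℕ} (x y : Fin m → ℝ)
    (hx0 : ∀ i, 0 ≤ x i) (hx1 : ∀ i, x i ≤ 1)
    (hy0 : ∀ i, 0 ≤ y i) (hy1 : ∀ i, y i ≤ 1)
    (c : Fin m → Fin m → ℝ) (hc0 : ∀ i j, 0 ≤ c i j) (hc1 : ∀ i j, c i j ≤ (m:ℝ) + 1) :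
    |((∑ i : Fin m, ∑ j : Fin m, if i.val < j.val then c i j * (x i * x j) else 0)
        + ∑ i : Fin m, (x i)^2)
      - ((∑ i : Fin m, ∑ j : Fin m, if i.val < j.val then c i j * (y i * y j) else 0)
        + ∑ i : Fin m, (y i)^2)|
      ≤ (2*(m:ℝ)*((m:ℝ)+1) + 2) * ∑ i : Fin m, |x i - y i| := by
  set S := ∑ i : Fin m, |x i - y i| with hS
  have key : ∀ i j : Fin m, |x i * x j - y i * y j| ≤ |x i - y i| + |x j - y j| := by
    intro i j
    have h1 : x i * x j - y i * y j = (x i - y i) * x j + y i * (x j - y j) := by ring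
    rw [h1]
    calc |(x i - y i) * x j + y i * (x j - y j)|
        ≤ |(x i - y i) * x j| + |y i * (x j - y j)| := abs_add_le _ _
      _ = |x i - y i| * |x j| + |y i| * |x j - y j| := by rw [abs_mul, abs_mul]
      _ ≤ |x i - y i| * 1 + 1 * |x j - y j| := by
          gcongr
          · rw [abs_of_nonneg (hx0 j)]; exact hx1 j
          · rw [abs_of_nonneg (hy0 i)]; exact hy1 i
      _ = |x i - y i| + |x j - y j| := by ring
  have comb : ((∑ i : Fin m, ∑ j : Fin m, if i.val < j.val then c i j * (x i * x j) else 0)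
        + ∑ i : Fin m, (x i)^2)
      - ((∑ i : Fin m, ∑ j : Fin m, if i.val < j.val then c i j * (y i * y j) else 0)
        + ∑ i : Fin m, (y i)^2)
      = (∑ i : Fin m, ∑ j : Fin m,
          if i.val < j.val then c i j * (x i * x j - y i * y j) else 0)
        + ∑ i : Fin m, ((x i)^2 - (y i)^2) := by
    rw [show ∀ a b a' b' : ℝ, (a + b) - (a' + b') = (a - a') + (b - b') from fun _ _ _ _ => by ring]
    rw [← Finset.sum_sub_distrib, ← Finset.sum_sub_distrib]
    have : ∀ i : Fin m,
        ((∑ j : Fin m, if i.val < j.val then c i j * (x i * x j) else 0)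
          - ∑ j : Fin m, if i.val < j.val then c i j * (y i * y j) else 0)
        = ∑ j : Fin m, if i.val < j.val then c i j * (x i * x j - y i * y j) else 0 := by
      intro i
      rw [← Finset.sum_sub_distrib]
      apply Finset.sum_congr rfl
      intro j _
      split <;> ring
    simp_rw [this]
  rw [comb]
  have bnd1 : |∑ i : Fin m, ∑ j : Fin m,
        if i.val < j.val then c i j * (x i * x j - y i * y j) else 0|
      ≤ 2*(m:ℝ)*((m:ℝ)+1) * S := by
    calc |∑ i : Fin m, ∑ j : Fin m, if i.val < j.val then c i j * (x i * x j - y i * y j) else 0|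
        ≤ ∑ i : Fin m, |∑ j : Fin m, if i.val < j.val then c i j * (x i * x j - y i * y j) else 0| :=
          Finset.abs_sum_le_sum_abs _ _
      _ ≤ ∑ i : Fin m, ∑ j : Fin m,
            |if i.val < j.val then c i j * (x i * x j - y i * y j) else 0| := by
          gcongr with i _
          exact Finset.abs_sum_le_sum_abs _ _
      _ ≤ ∑ i : Fin m, ∑ j : Fin m, ((m:ℝ)+1) * (|x i - y i| + |x j - y j|) := by
          gcongr with i _ j _
          split
          · rw [abs_mul, abs_of_nonneg (hc0 i j)]
            have := key i j
            have hcij := hc1 i j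
            have h0 := hc0 i j
            have habs : (0:ℝ) ≤ |x i * x j - y i * y j| := abs_nonneg _
            nlinarith
          · simp only [abs_zero]
            positivity
      _ = 2*(m:ℝ)*((m:ℝ)+1) * S := by
          simp only [← Finset.mul_sum]
          rw [hS]
          have : ∀ i : Fin m, ∑ j : Fin m, (|x i - y i| + |x j - y j|)
              = (m:ℝ) * |x i - y i| + ∑ j : Fin m, |x j - y j| := by
            intro i
            rw [Finset.sum_add_distrib, Finset.sum_const, Finset.card_univ]
            simp [nsmul_eq_mul]
          simp_rw [this]
          rw [Finset.sum_add_distrib, Finset.sum_const, Finset.card_univ, ← Finset.mul_sum]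
          simp only [Fintype.card_fin, nsmul_eq_mul]
          ring
  have bnd2 : |∑ i : Fin m, ((x i)^2 - (y i)^2)| ≤ 2 * S := by
    calc |∑ i : Fin m, ((x i)^2 - (y i)^2)|
        ≤ ∑ i : Fin m, |(x i)^2 - (y i)^2| := Finset.abs_sum_le_sum_abs _ _
      _ ≤ ∑ i : Fin m, 2 * |x i - y i| := by
          gcongr with i _
          have h1 : (x i)^2 - (y i)^2 = (x i + y i) * (x i - y i) := by ring
          rw [h1, abs_mul]
          have : |x i + y i| ≤ 2 := by
            rw [abs_of_nonneg (by linarith [hx0 i, hy0 i])]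
            linarith [hx1 i, hy1 i]
          nlinarith [abs_nonneg (x i - y i)]
      _ = 2 * S := by rw [← Finset.mul_sum]
  calc |(∑ i : Fin m, ∑ j : Fin m, if i.val < j.val then c i j * (x i * x j - y i * y j) else 0)
        + ∑ i : Fin m, ((x i)^2 - (y i)^2)|
      ≤ |∑ i : Fin m, ∑ j : Fin m, if i.val < j.val then c i j * (x i * x j - y i * y j) else 0|
        + |∑ i : Fin m, ((x i)^2 - (y i)^2)| := abs_add_le _ _
    _ ≤ 2*(m:ℝ)*((m:ℝ)+1) * S + 2 * S := add_le_add bnd1 bnd2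
    _ = (2*(m:ℝ)*((m:ℝ)+1) + 2) * S := by ring

lemma sum_leafCount {m n : ℕ} (ω : Fin n → Fin m) : ∑ i : Fin m, leafCount ω i = n := by
  unfold leafCount
  rw [← Finset.card_eq_sum_card_fiberwise (fun j (_ : j ∈ Finset.univ) => Finset.mem_univ (ω j))]
  simp

lemma cast_mul_pred (a : ℕ) : ((a * (a - 1) : ℕ) : ℝ) = (a:ℝ)^2 - a := by
  cases a with
  | zero => simp
  | succ k => push_cast [Nat.succ_sub_one]; ring

lemma wiener_cast {m n : ℕ} (ω : Fin n → Fin m) :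
    (wiener ω : ℝ)
      = (∑ i : Fin m, ∑ j : Fin m, if i.val < j.val then ((j.val - i.val : ℕ) : ℝ) else 0)
        + (∑ i : Fin m, ∑ j : Fin m,
            if i.val < j.val then (((j.val - i.val : ℕ) : ℝ) + 2)
              * ((leafCount ω i : ℝ) * (leafCount ω j : ℝ)) else 0)
        + (∑ i : Fin m, ((leafCount ω i : ℝ)^2 - (leafCount ω i : ℝ)))
        + (∑ i : Fin m, ∑ j : Fin m,
            ((Nat.dist i.val j.val : ℝ) + 1) * (leafCount ω i : ℝ)) := by
  unfold wiener
  have h3 : ∀ a : ℕ, (a:ℝ) * ((a - 1 : ℕ):ℝ) = (a:ℝ)^2 - a := by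
    intro a
    cases a with
    | zero => simp
    | succ k => push_cast [Nat.succ_sub_one]; ring
  push_cast
  simp_rw [h3]

lemma Tval (m : ℕ) :
    6 * (∑ i : Fin m, ∑ j : Fin m,
        if i.val < j.val then ((j.val - i.val : ℕ):ℝ) + 2 else 0)
      = (m:ℝ)^3 + 6*(m:ℝ)^2 - 7*(m:ℝ) := by
  have hfin : (∑ i : Fin m, ∑ j : Fin m,
        if i.val < j.val then ((j.val - i.val : ℕ):ℝ) + 2 else 0)
      = ∑ i ∈ Finset.range m, ∑ j ∈ Finset.range m,
          if i < j then ((j - i : ℕ):ℝ) + 2 else 0 := by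
    rw [← Fin.sum_univ_eq_sum_range
      (fun a => ∑ j ∈ Finset.range m, if a < j then ((j - a : ℕ):ℝ) + 2 else 0) m]
    apply Finset.sum_congr rfl
    intro i _
    rw [← Fin.sum_univ_eq_sum_range (fun b => if i.val < b then ((b - i.val : ℕ):ℝ) + 2 else 0) m]
  have hcast : (∑ i ∈ Finset.range m, ∑ j ∈ Finset.range m,
        if i < j then ((j - i : ℕ):ℝ) + 2 else 0)
      = ((∑ i ∈ Finset.range m, ∑ j ∈ Finset.range m,
          if i < j then j - i + 2 else 0 : ℕ) : ℝ) := by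
    push_cast
    rfl
  have h6 := spine6 m
  have h6' : (6:ℝ) * ((∑ i ∈ Finset.range m, ∑ j ∈ Finset.range m,
      if i < j then j - i + 2 else 0 : ℕ) : ℝ) + 7*(m:ℝ) = (m:ℝ)^3 + 6*(m:ℝ)^2 := by
    exact_mod_cast congrArg (Nat.cast : ℕ → ℝ) h6
  rw [hfin, hcast]
  linarith

lemma const_eq {m : ℕ} (hm : 2 ≤ m) :
    ((m:ℝ)^2 + 6*(m:ℝ) - 1) / (6*(m:ℝ))
      = (∑ i : Fin m, ∑ j : Fin m,
          if i.val < j.val then (((j.val - i.val : ℕ):ℝ) + 2) * ((1/(m:ℝ)) * (1/(m:ℝ))) else 0)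
        + ∑ _i : Fin m, (1/(m:ℝ))^2 := by
  have hm0 : (0:ℝ) < m := by exact_mod_cast (by omega : 0 < m)
  have hpull : (∑ i : Fin m, ∑ j : Fin m,
        if i.val < j.val then (((j.val - i.val : ℕ):ℝ) + 2) * ((1/(m:ℝ)) * (1/(m:ℝ))) else 0)
      = ((1/(m:ℝ)) * (1/(m:ℝ))) * ∑ i : Fin m, ∑ j : Fin m,
          if i.val < j.val then ((j.val - i.val : ℕ):ℝ) + 2 else 0 := by
    rw [Finset.mul_sum]
    apply Finset.sum_congr rfl
    intro i _
    rw [Finset.mul_sum]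
    apply Finset.sum_congr rfl
    intro j _
    split <;> ring
  have hconst : (∑ _i : Fin m, (1/(m:ℝ))^2) = (m:ℝ) * (1/(m:ℝ))^2 := by
    rw [Finset.sum_const, Finset.card_univ]
    simp [nsmul_eq_mul]
  rw [hpull, hconst]
  have hT := Tval m
  set T := ∑ i : Fin m, ∑ j : Fin m,
      if i.val < j.val then ((j.val - i.val : ℕ):ℝ) + 2 else 0 with hTdef
  have hTe : T = ((m:ℝ)^3 + 6*(m:ℝ)^2 - 7*(m:ℝ))/6 := by linarith
  rw [hTe]
  field_simp
  ring

lemma pointwise {m n : ℕ} (hm : 2 ≤ m) (hn : 1 ≤ n) (ω : Fin n → Fin m) :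
    |(wiener ω : ℝ) / (n:ℝ)^2 - ((m:ℝ)^2 + 6*(m:ℝ) - 1)/(6*(m:ℝ))|
      ≤ ((m:ℝ)^3 + 1 + (m:ℝ)^2)/n
        + (2*(m:ℝ)*((m:ℝ)+1)+2) * ∑ i : Fin m, |(leafCount ω i : ℝ)/n - 1/(m:ℝ)| := by
  have hn0 : (0:ℝ) < n := by exact_mod_cast hn
  have hm0 : (0:ℝ) < m := by exact_mod_cast (by omega : 0 < m)
  set x : Fin m → ℝ := fun i => (leafCount ω i : ℝ)/n with hxdef
  set y : Fin m → ℝ := fun _ => 1/(m:ℝ) with hydef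
  have hle : ∀ i, (leafCount ω i : ℕ) ≤ n := by
    intro i
    calc leafCount ω i ≤ (Finset.univ : Finset (Fin n)).card := Finset.card_filter_le _ _
      _ = n := by simp
  have hx0 : ∀ i, 0 ≤ x i := fun i => by positivity
  have hx1 : ∀ i, x i ≤ 1 := by
    intro i
    show (leafCount ω i : ℝ)/n ≤ 1
    rw [div_le_one hn0]
    exact_mod_cast hle i
  have hy0 : ∀ i, 0 ≤ y i := fun i => by rw [hydef]; positivity
  have hy1 : ∀ i, y i ≤ 1 := by
    intro i
    rw [hydef]
    simp only [one_div]
    rw [inv_le_one_iff₀]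
    right; exact_mod_cast (by omega : 1 ≤ m)
  set cf : Fin m → Fin m → ℝ := fun i j => ((j.val - i.val : ℕ):ℝ) + 2 with hcf
  have hc0 : ∀ i j, 0 ≤ cf i j := by intro i j; rw [hcf]; positivity
  have hc1 : ∀ i j, cf i j ≤ (m:ℝ) + 1 := by
    intro i j
    rw [hcf]
    have h : (j.val - i.val : ℕ) ≤ m - 1 := by omega
    have h2 : ((j.val - i.val : ℕ):ℝ) ≤ ((m - 1 : ℕ):ℝ) := by exact_mod_cast h
    have h3 : ((m - 1 : ℕ):ℝ) = (m:ℝ) - 1 := by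
      have : 1 ≤ m := by omega
      push_cast [this]; ring
    simp only []
    rw [h3] at h2
    linarith
  set A := ∑ i : Fin m, ∑ j : Fin m,
      if i.val < j.val then ((j.val - i.val : ℕ) : ℝ) else 0 with hA
  set B := ∑ i : Fin m, ∑ j : Fin m,
      ((Nat.dist i.val j.val : ℝ) + 1) * (leafCount ω i : ℝ) with hB
  have hsum : ∑ i : Fin m, (leafCount ω i : ℝ) = n := by
    exact_mod_cast congrArg (Nat.cast : ℕ → ℝ) (sum_leafCount ω)
  -- bounds for A and B
  have hA0 : 0 ≤ A := by
    rw [hA]; apply Finset.sum_nonneg; intro i _; apply Finset.sum_nonneg; intro j _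
    split
    · positivity
    · exact le_refl 0
  have hAup : A ≤ (m:ℝ)^3 := by
    rw [hA]
    calc ∑ i : Fin m, ∑ j : Fin m, (if i.val < j.val then ((j.val - i.val : ℕ) : ℝ) else 0)
        ≤ ∑ _i : Fin m, ∑ _j : Fin m, (m:ℝ) := by
          gcongr with i _ j _
          split
          · have : (j.val - i.val : ℕ) ≤ m := by omega
            exact_mod_cast this
          · positivity
      _ = (m:ℝ)^3 := by
          simp [Finset.sum_const, Finset.card_univ, nsmul_eq_mul]; ring
  have hB0 : 0 ≤ B := by
    rw [hB]; apply Finset.sum_nonneg; intro i _; apply Finset.sum_nonneg; intro j _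
    positivity
  have hBup : B ≤ (m:ℝ)^2 * n := by
    rw [hB]
    calc ∑ i : Fin m, ∑ j : Fin m, ((Nat.dist i.val j.val : ℝ) + 1) * (leafCount ω i : ℝ)
        ≤ ∑ i : Fin m, ∑ _j : Fin m, (m:ℝ) * (leafCount ω i : ℝ) := by
          gcongr with i _ j _
          · have : Nat.dist i.val j.val + 1 ≤ m := by
              have hi := i.isLt; have hj := j.isLt
              have : Nat.dist i.val j.val ≤ m - 1 := by
                rcases Nat.le_total i.val j.val with h | h
                · rw [Nat.dist_eq_sub_of_le h]; omega
                · rw [Nat.dist_eq_sub_of_le_right h]; omega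
              omega
            exact_mod_cast this
      _ = (m:ℝ)^2 * n := by
          simp only [Finset.sum_const, Finset.card_univ, Fintype.card_fin, nsmul_eq_mul]
          rw [← Finset.mul_sum, ← Finset.mul_sum, hsum]
          ring
  -- decomposition
  have hdecomp : (wiener ω : ℝ) / (n:ℝ)^2 - ((m:ℝ)^2 + 6*(m:ℝ) - 1)/(6*(m:ℝ))
      = A/(n:ℝ)^2 + B/(n:ℝ)^2 - 1/(n:ℝ)
        + (((∑ i : Fin m, ∑ j : Fin m, if i.val < j.val then cf i j * (x i * x j) else 0)
            + ∑ i : Fin m, (x i)^2)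
          - ((∑ i : Fin m, ∑ j : Fin m, if i.val < j.val then cf i j * (y i * y j) else 0)
            + ∑ i : Fin m, (y i)^2)) := by
    rw [wiener_cast, const_eq hm]
    have hP : (∑ i : Fin m, ∑ j : Fin m,
          if i.val < j.val then (((j.val - i.val : ℕ) : ℝ) + 2)
            * ((leafCount ω i : ℝ) * (leafCount ω j : ℝ)) else 0) / (n:ℝ)^2
        = ∑ i : Fin m, ∑ j : Fin m, if i.val < j.val then cf i j * (x i * x j) else 0 := by
      rw [Finset.sum_div]
      apply Finset.sum_congr rfl
      intro i _
      rw [Finset.sum_div]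
      apply Finset.sum_congr rfl
      intro j _
      split
      · show (((j.val - i.val : ℕ):ℝ) + 2) * ((leafCount ω i : ℝ) * (leafCount ω j : ℝ)) / (n:ℝ)^2
            = (((j.val - i.val : ℕ):ℝ) + 2) * ((leafCount ω i : ℝ)/n * ((leafCount ω j : ℝ)/n))
        ring
      · simp
    have hD : (∑ i : Fin m, ((leafCount ω i : ℝ)^2 - (leafCount ω i : ℝ))) / (n:ℝ)^2
        = (∑ i : Fin m, (x i)^2) - 1/(n:ℝ) := by
      rw [Finset.sum_div]
      rw [Finset.sum_congr rfl (fun i _ =>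
        show ((leafCount ω i : ℝ)^2 - (leafCount ω i : ℝ))/(n:ℝ)^2
            = (x i)^2 - (leafCount ω i : ℝ)/(n:ℝ)^2 from by
          simp only [hxdef]; ring)]
      rw [Finset.sum_sub_distrib, ← Finset.sum_div, hsum]
      have hnn : (n:ℝ)/(n:ℝ)^2 = 1/(n:ℝ) := by
        rw [sq, div_mul_eq_div_div, div_self (ne_of_gt hn0)]
      rw [hnn]
    rw [show ∀ a p d b q : ℝ, (a + p + d + b)/(n:ℝ)^2 - q
        = a/(n:ℝ)^2 + p/(n:ℝ)^2 + d/(n:ℝ)^2 + b/(n:ℝ)^2 - q from fun a p d b q => by ring]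
    rw [hP, hD]
    ring
  rw [hdecomp]
  have hQ := Qlip x y hx0 hx1 hy0 hy1 cf hc0 hc1
  have habs : |A/(n:ℝ)^2 + B/(n:ℝ)^2 - 1/(n:ℝ)
      + (((∑ i : Fin m, ∑ j : Fin m, if i.val < j.val then cf i j * (x i * x j) else 0)
          + ∑ i : Fin m, (x i)^2)
        - ((∑ i : Fin m, ∑ j : Fin m, if i.val < j.val then cf i j * (y i * y j) else 0)
          + ∑ i : Fin m, (y i)^2))|
      ≤ A/(n:ℝ)^2 + B/(n:ℝ)^2 + 1/(n:ℝ)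
        + (2*(m:ℝ)*((m:ℝ)+1)+2) * ∑ i : Fin m, |x i - y i| := by
    have h1 := abs_add_le (A/(n:ℝ)^2 + B/(n:ℝ)^2 - 1/(n:ℝ))
      (((∑ i : Fin m, ∑ j : Fin m, if i.val < j.val then cf i j * (x i * x j) else 0)
          + ∑ i : Fin m, (x i)^2)
        - ((∑ i : Fin m, ∑ j : Fin m, if i.val < j.val then cf i j * (y i * y j) else 0)
          + ∑ i : Fin m, (y i)^2))
    have habc : ∀ a b c : ℝ, 0 ≤ a → 0 ≤ b → 0 ≤ c → |a + b - c| ≤ a + b + c := by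
      intro a b c ha hb hc
      rw [abs_le]
      constructor <;> linarith
    have h2 : |A/(n:ℝ)^2 + B/(n:ℝ)^2 - 1/(n:ℝ)| ≤ A/(n:ℝ)^2 + B/(n:ℝ)^2 + 1/(n:ℝ) :=
      habc _ _ _ (div_nonneg hA0 (by positivity)) (div_nonneg hB0 (by positivity))
        (by positivity)
    linarith
  apply le_trans habs
  have hn1 : (1:ℝ) ≤ (n:ℝ) := by exact_mod_cast hn
  have hAn : A/(n:ℝ)^2 ≤ (m:ℝ)^3/(n:ℝ) := by
    calc A/(n:ℝ)^2 ≤ (m:ℝ)^3/(n:ℝ)^2 := by gcongr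
      _ ≤ (m:ℝ)^3/(n:ℝ) := by
        apply div_le_div_of_nonneg_left (by positivity) hn0
        nlinarith
  have hBn : B/(n:ℝ)^2 ≤ (m:ℝ)^2/(n:ℝ) := by
    calc B/(n:ℝ)^2 ≤ ((m:ℝ)^2 * n)/(n:ℝ)^2 := by gcongr
      _ = (m:ℝ)^2/(n:ℝ) := by
        rw [sq (n:ℝ)]
        rw [div_eq_div_iff (by positivity) (ne_of_gt hn0)]
        ring
  have hxy : ∀ i : Fin m, |x i - y i| = |(leafCount ω i : ℝ)/n - 1/(m:ℝ)| := fun i => rfl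
  simp_rw [hxy]
  have : A/(n:ℝ)^2 + B/(n:ℝ)^2 + 1/(n:ℝ) ≤ ((m:ℝ)^3 + 1 + (m:ℝ)^2)/(n:ℝ) := by
    have : ((m:ℝ)^3 + 1 + (m:ℝ)^2)/(n:ℝ) = (m:ℝ)^3/(n:ℝ) + 1/(n:ℝ) + (m:ℝ)^2/(n:ℝ) := by
      ring
    rw [this]
    linarith
  linarith

/-- `W_n / n²` converges to `(m²+6m-1)/(6m)` in `L¹` as `n → ∞`. -/
theorem wiener_L1_convergence (m : ℕ) (hm : 2 ≤ m) :
    Tendsto (fun n : ℕ =>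
        (∑ ω : Fin n → Fin m,
          |(wiener ω : ℝ) / (n : ℝ) ^ 2 - (m ^ 2 + 6 * m - 1) / (6 * m)|) / (m : ℝ) ^ n)
      atTop (nhds 0) := by
  have hm0 : (0:ℝ) < m := by exact_mod_cast (by omega : 0 < m)
  have hm1 : (1:ℕ) ≤ m := by omega
  set K : ℝ := 2*(m:ℝ)*((m:ℝ)+1)+2 with hK
  set C : ℝ := (m:ℝ)^3 + 1 + (m:ℝ)^2 with hC
  have hK0 : 0 ≤ K := by rw [hK]; positivity
  set g : ℕ → ℝ := fun n => C/(n:ℝ) + K * (m:ℝ) * Real.sqrt (1/(n:ℝ)) with hg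
  apply squeeze_zero' (g := g)
  · filter_upwards [eventually_ge_atTop 0] with n _
    apply div_nonneg (Finset.sum_nonneg fun ω _ => abs_nonneg _) (by positivity)
  · filter_upwards [eventually_ge_atTop 2] with n hn
    have hn1 : (1:ℕ) ≤ n := by omega
    have hn0 : (0:ℝ) < n := by exact_mod_cast hn1
    have hmn : (0:ℝ) < (m:ℝ)^n := by positivity
    rw [div_le_iff₀ hmn]
    calc ∑ ω : Fin n → Fin m,
          |(wiener ω : ℝ) / (n : ℝ) ^ 2 - ((m:ℝ) ^ 2 + 6 * (m:ℝ) - 1) / (6 * (m:ℝ))|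
        ≤ ∑ ω : Fin n → Fin m,
            (C/(n:ℝ) + K * ∑ i : Fin m, |(leafCount ω i : ℝ)/n - 1/(m:ℝ)|) := by
          apply Finset.sum_le_sum
          intro ω _
          exact pointwise hm hn1 ω
      _ = (m:ℝ)^n * (C/(n:ℝ))
          + K * ∑ i : Fin m, ∑ ω : Fin n → Fin m, |(leafCount ω i : ℝ)/n - 1/(m:ℝ)| := by
          rw [Finset.sum_add_distrib, Finset.sum_const, Finset.card_univ]
          rw [← Finset.mul_sum, Finset.sum_comm]
          simp [nsmul_eq_mul]
      _ ≤ (m:ℝ)^n * (C/(n:ℝ)) + K * ((m:ℝ) * ((m:ℝ)^n * Real.sqrt n / n)) := by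
          gcongr
          calc ∑ i : Fin m, ∑ ω : Fin n → Fin m, |(leafCount ω i : ℝ)/n - 1/(m:ℝ)|
              ≤ ∑ _i : Fin m, (m:ℝ)^n * Real.sqrt n / n := by
                apply Finset.sum_le_sum
                intro i _
                have heq : ∀ ω : Fin n → Fin m, |(leafCount ω i : ℝ)/n - 1/(m:ℝ)|
                    = |(leafCount ω i : ℝ) - (n:ℝ)/(m:ℝ)| / n := by
                  intro ω
                  have hrw : (leafCount ω i : ℝ)/n - 1/(m:ℝ)
                      = ((leafCount ω i : ℝ) - (n:ℝ)/(m:ℝ))/n := by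
                    field_simp
                  rw [hrw, abs_div, abs_of_pos hn0]
                rw [Finset.sum_congr rfl (fun ω _ => heq ω), ← Finset.sum_div]
                gcongr
                exact l1_bound hm1 i hn
              _ = (m:ℝ) * ((m:ℝ)^n * Real.sqrt n / n) := by
                rw [Finset.sum_const, Finset.card_univ]
                simp [nsmul_eq_mul]
      _ ≤ g n * (m:ℝ)^n := by
          rw [hg]
          have hsq : Real.sqrt n / n = Real.sqrt (1/(n:ℝ)) := by
            rw [Real.sqrt_div_self', one_div, one_div, Real.sqrt_inv]
          have : (m:ℝ)^n * Real.sqrt (n:ℝ) / (n:ℝ) = (m:ℝ)^n * ((Real.sqrt n)/n) := by ring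
          rw [this, hsq]
          ring_nf
          apply le_of_eq
          ring
  · rw [hg]
    have h1 : Tendsto (fun n : ℕ => C/(n:ℝ)) atTop (nhds 0) :=
      tendsto_const_div_atTop_nhds_zero_nat C
    have h2 : Tendsto (fun n : ℕ => Real.sqrt (1/(n:ℝ))) atTop (nhds 0) :=
      (Real.continuous_sqrt.tendsto' 0 0 Real.sqrt_zero).comp
        tendsto_one_div_atTop_nhds_zero_nat
    have h2' : Tendsto (fun n : ℕ => K * (m:ℝ) * Real.sqrt (1/(n:ℝ))) atTop (nhds 0) := by
      have := h2.const_mul (K * (m:ℝ))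
      simpa using this
    have := h1.add h2'
    simpa using this
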